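/- Let G be a finite group and let g, h ∈ G. In the group algebra ℚ[G], let x_{(k)} denote the class sum Σ_{y ∈ conjugacy class of k} y. Let G act on the set (conjugacy class of g) × (conjugacy class of h) by simultaneous conjugation, and let R be a set of representatives of the orbits of this action. Then x_{(g)} · x_{(h)} = Σ_{(g',h') ∈ R} ( |C(g'h')| / |C(g') ∩ C(h')| ) · x_{(g'h')}, where C(k) denotes the centralizer of k in G. (This identity gives the structure constants of the orbifold quantum cohomology ring of BG, which equals the center Z(ℚ[G]) of the group algebra.) -/
import Mathlib


open scoped Classical in
/-- The class sum of `g` in the group algebra `ℚ[G]`: the sum of all conjugates of `g`. -/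
noncomputable def classSum (G : Type*) [Group G] [Fintype G] (g : G) :
    MonoidAlgebra ℚ G :=
  ∑ y ∈ Finset.univ.filter (fun y => IsConj g y), MonoidAlgebra.of ℚ G y

open scoped Classical in
/-- Fiber-counting lemma: summing `F ∘ φ` over the group equals `|S|` times the sum of `F`
over the image, when fibers of `φ` are cosets of `S`. -/
lemma aux_fiber_sum {G X M : Type*} [Group G] [Fintype G] [AddCommMonoid M]
    (φ : G → X) (S : Subgroup G) (hS : ∀ f c : G, φ f = φ c ↔ c⁻¹ * f ∈ S) (F : X → M) :
    ∑ f : G, F (φ f) = Nat.card S • ∑ y ∈ Finset.univ.image φ, F y := by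
  rw [Finset.sum_comp, Finset.smul_sum]
  refine Finset.sum_congr rfl fun y hy => ?_
  obtain ⟨c, -, rfl⟩ := Finset.mem_image.mp hy
  congr 1
  rw [Nat.card_eq_fintype_card, Fintype.card_subtype]
  apply Finset.card_bij (fun f _ => c⁻¹ * f)
  · intro f hf
    simp only [Finset.mem_filter, Finset.mem_univ, true_and] at hf ⊢
    exact (hS f c).mp hf
  · intro a ha b hb hab
    exact mul_left_cancel hab
  · intro s hs
    simp only [Finset.mem_filter, Finset.mem_univ, true_and] at hs ⊢
    exact ⟨c * s, by rw [hS]; simpa, by group⟩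

open scoped Classical in
lemma aux_conj_sum {G : Type*} [Group G] [Fintype G] (k : G) :
    ∑ f : G, MonoidAlgebra.of ℚ G (f * k * f⁻¹) =
      Nat.card (Subgroup.centralizer ({k} : Set G)) • classSum G k := by
  rw [aux_fiber_sum (fun f => f * k * f⁻¹) (Subgroup.centralizer {k})
    (fun f c => by
      rw [Subgroup.mem_centralizer_singleton_iff]
      constructor
      · intro hfc
        have hfc' : f * k * f⁻¹ = c * k * c⁻¹ := hfc
        have h1 : f * k = c * k * c⁻¹ * f := by
          rw [← hfc']; group
        calc c⁻¹ * f * k = c⁻¹ * (f * k) := by group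
          _ = c⁻¹ * (c * k * c⁻¹ * f) := by rw [h1]
          _ = k * (c⁻¹ * f) := by group
      · intro hcf
        show f * k * f⁻¹ = c * k * c⁻¹
        calc f * k * f⁻¹ = c * (c⁻¹ * f * k) * f⁻¹ := by group
          _ = c * (k * (c⁻¹ * f)) * f⁻¹ := by rw [hcf]
          _ = c * k * c⁻¹ := by group)]
  have himg : Finset.univ.image (fun f : G => f * k * f⁻¹) =
      Finset.univ.filter (fun y => IsConj k y) := by
    ext y
    simp only [Finset.mem_image, Finset.mem_filter, Finset.mem_univ, true_and]
    exact ⟨fun ⟨f, hf⟩ => isConj_iff.mpr ⟨f, hf⟩, fun hc => isConj_iff.mp hc⟩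
  rw [himg]
  rfl

example : True := trivial

open scoped Classical in
lemma aux_conj_eq_iff {G : Type*} [Group G] (k f c : G) :
    f * k * f⁻¹ = c * k * c⁻¹ ↔ c⁻¹ * f ∈ Subgroup.centralizer ({k} : Set G) := by
  rw [Subgroup.mem_centralizer_singleton_iff]
  constructor
  · intro hfc
    have h1 : f * k = c * k * c⁻¹ * f := by rw [← hfc]; group
    calc c⁻¹ * f * k = c⁻¹ * (f * k) := by group
      _ = c⁻¹ * (c * k * c⁻¹ * f) := by rw [h1]
      _ = k * (c⁻¹ * f) := by group
  · intro hcf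
    calc f * k * f⁻¹ = c * (c⁻¹ * f * k) * f⁻¹ := by group
      _ = c * (k * (c⁻¹ * f)) * f⁻¹ := by rw [hcf]
      _ = c * k * c⁻¹ := by group

open scoped Classical in
/-- Product of class sums in `ℚ[G]`: if `R` is a set of representatives for the orbits of
the simultaneous-conjugation action of `G` on (conj class of `g`) × (conj class of `h`),
then `x_{(g)} · x_{(h)} = Σ_{(g',h') ∈ R} (|C(g'h')| / |C(g') ∩ C(h')|) · x_{(g'h')}`. -/
theorem classSum_mul_classSum (G : Type*) [Group G] [Fintype G] (g h : G)
    (R : Finset (G × G))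
    (hR : ∀ p : G × G, IsConj g p.1 → IsConj h p.2 →
      ∃! q : G × G, q ∈ R ∧ ∃ f : G, q = (f * p.1 * f⁻¹, f * p.2 * f⁻¹))
    (hRmem : ∀ q ∈ R, IsConj g q.1 ∧ IsConj h q.2) :
    classSum G g * classSum G h =
      ∑ q ∈ R,
        ((Nat.card (Subgroup.centralizer {q.1 * q.2} : Subgroup G) : ℚ) /
          (Nat.card ((Subgroup.centralizer {q.1} ⊓ Subgroup.centralizer {q.2}) : Subgroup G) : ℚ))
          • classSum G (q.1 * q.2) := by
  set orb : G × G → Finset (G × G) :=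
    fun q => Finset.univ.image (fun f : G => (f * q.1 * f⁻¹, f * q.2 * f⁻¹)) with horb
  -- Step A
  have stepA : classSum G g * classSum G h =
      ∑ p ∈ (Finset.univ.filter (fun y => IsConj g y)) ×ˢ
            (Finset.univ.filter (fun y => IsConj h y)),
        MonoidAlgebra.of ℚ G (p.1 * p.2) := by
    unfold classSum
    rw [Finset.sum_mul_sum, Finset.sum_product]
    exact Finset.sum_congr rfl fun a _ => Finset.sum_congr rfl fun b _ => (map_mul _ a b).symm
  -- orbit membership characterization
  have horbmem : ∀ q p : G × G, p ∈ orb q ↔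
      ∃ f : G, (f * q.1 * f⁻¹, f * q.2 * f⁻¹) = p := by
    intro q p
    simp [horb]
  -- Step B: the product set is the disjoint union of orbits
  have hcover : (Finset.univ.filter (fun y => IsConj g y)) ×ˢ
      (Finset.univ.filter (fun y => IsConj h y)) = R.biUnion orb := by
    ext p
    simp only [Finset.mem_product, Finset.mem_filter, Finset.mem_univ, true_and,
      Finset.mem_biUnion]
    constructor
    · rintro ⟨h1, h2⟩
      obtain ⟨q, ⟨hqR, f, hqf⟩, -⟩ := hR p h1 h2
      refine ⟨q, hqR, (horbmem q p).mpr ⟨f⁻¹, ?_⟩⟩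
      rw [hqf]
      ext <;> simp <;> group
    · rintro ⟨q, hqR, hpq⟩
      obtain ⟨f, rfl⟩ := (horbmem q p).mp hpq
      obtain ⟨hg1, hg2⟩ := hRmem q hqR
      exact ⟨hg1.trans (isConj_iff.mpr ⟨f, rfl⟩), hg2.trans (isConj_iff.mpr ⟨f, rfl⟩)⟩
  have hdisj : (R : Set (G × G)).PairwiseDisjoint orb := by
    intro q hq q' hq' hne
    show Disjoint (orb q) (orb q')
    rw [Finset.disjoint_left]
    intro p hp hp'
    obtain ⟨f, hf⟩ := (horbmem q p).mp hp
    obtain ⟨f', hf'⟩ := (horbmem q' p).mp hp'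
    have hpc : IsConj g p.1 ∧ IsConj h p.2 := by
      obtain ⟨hg1, hg2⟩ := hRmem q hq
      rw [← hf]
      exact ⟨hg1.trans (isConj_iff.mpr ⟨f, rfl⟩), hg2.trans (isConj_iff.mpr ⟨f, rfl⟩)⟩
    obtain ⟨u, -, hu⟩ := hR p hpc.1 hpc.2
    have e1 : q = (f⁻¹ * p.1 * f⁻¹⁻¹, f⁻¹ * p.2 * f⁻¹⁻¹) := by
      rw [← hf]; ext <;> simp <;> group
    have e2 : q' = (f'⁻¹ * p.1 * f'⁻¹⁻¹, f'⁻¹ * p.2 * f'⁻¹⁻¹) := by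
      rw [← hf']; ext <;> simp <;> group
    exact hne ((hu q ⟨hq, f⁻¹, e1⟩).trans (hu q' ⟨hq', f'⁻¹, e2⟩).symm)
  rw [stepA, hcover, Finset.sum_biUnion hdisj]
  -- Step C: per-orbit computation
  refine Finset.sum_congr rfl fun q hq => ?_
  set S : Subgroup G := Subgroup.centralizer {q.1} ⊓ Subgroup.centralizer {q.2} with hSdef
  have key : ∑ f : G, MonoidAlgebra.of ℚ G (f * (q.1 * q.2) * f⁻¹) =
      Nat.card S • ∑ p ∈ orb q, MonoidAlgebra.of ℚ G (p.1 * p.2) := by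
    have := aux_fiber_sum (fun f : G => (f * q.1 * f⁻¹, f * q.2 * f⁻¹)) S
      (fun f c => by
        rw [hSdef, Subgroup.mem_inf, ← aux_conj_eq_iff q.1 f c, ← aux_conj_eq_iff q.2 f c,
          Prod.ext_iff])
      (fun p => MonoidAlgebra.of ℚ G (p.1 * p.2))
    simp only [horb]
    rw [show (∑ f : G, MonoidAlgebra.of ℚ G (f * (q.1 * q.2) * f⁻¹)) =
        ∑ f : G, MonoidAlgebra.of ℚ G ((f * q.1 * f⁻¹) * (f * q.2 * f⁻¹)) from
      Finset.sum_congr rfl fun f _ => by congr 1; group]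
    convert this using 3
    ext p
    simp
  rw [aux_conj_sum (q.1 * q.2)] at key
  have hSpos : (0 : ℚ) < (Nat.card S : ℚ) := by
    exact_mod_cast Nat.card_pos
  have key' : (Nat.card S : ℚ) • ∑ p ∈ orb q, MonoidAlgebra.of ℚ G (p.1 * p.2) =
      (Nat.card (Subgroup.centralizer ({q.1 * q.2} : Set G)) : ℚ) • classSum G (q.1 * q.2) := by
    rw [Nat.cast_smul_eq_nsmul, Nat.cast_smul_eq_nsmul, key]
  have := congrArg (fun x => ((Nat.card S : ℚ))⁻¹ • x) key'
  simp only [smul_smul, inv_mul_cancel₀ hSpos.ne', one_smul] at this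
  rw [this, div_eq_inv_mul]
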